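/- (Eq. (16)) Under the hypotheses of the higher-order parameter shift formula — C : (Fin M → ℝ) → ℝ of trigonometric form a + b·cos t + c·sin t in each coordinate, multiplicities N : Fin M → ℕ with |α| = Σ_l N(l), and a coordinate i — the magnitude of the (|α|+1)-th order derivative satisfies the bound |∂ᵢ( ∂₁^{N(1)} ⋯ ∂_M^{N(M)} C )(θ)| ≤ 2^{−|α|} · Σ_{ω} ( Π_l |d(ω(l), N(l))| ) · |∂ᵢC(θ + π·ω)|, where the sum runs over all functions ω assigning to each l a shift in the support for N(l), and d are the Pascal-tree coefficients (d(0,0) = 1; d(±1/2,1) = ±1; for even N ≥ 2, d(0,N) = (−1)^{N/2}·2^{N−1}, d(±1,N) = (−1)^{(N−2)/2}·2^{N−2}; for odd N ≥ 3, d(±1/2,N) = ±(−1)^{(N−1)/2}·3·2^{N−3}, d(±3/2,N) = ∓(−1)^{(N−1)/2}·2^{N−3}). -/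

import Mathlib

/-- The Pascal-tree coefficients `d(ω, N)`. -/
def pascalD (ω : ℚ) (N : ℕ) : ℤ :=
  if N = 0 then (if ω = 0 then 1 else 0)
  else if N = 1 then (if ω = 1/2 then 1 else if ω = -1/2 then -1 else 0)
  else if N % 2 = 0 then
    (if ω = 0 then (-1) ^ (N / 2) * 2 ^ (N - 1)
     else if ω = 1 ∨ ω = -1 then (-1) ^ ((N - 2) / 2) * 2 ^ (N - 2)
     else 0)
  else
    (if ω = 1/2 then (-1) ^ ((N - 1) / 2) * 3 * 2 ^ (N - 3)
     else if ω = -1/2 then -((-1) ^ ((N - 1) / 2) * 3 * 2 ^ (N - 3))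
     else if ω = 3/2 then -((-1) ^ ((N - 1) / 2) * 2 ^ (N - 3))
     else if ω = -3/2 then (-1) ^ ((N - 1) / 2) * 2 ^ (N - 3)
     else 0)

/-- The support of the Pascal-tree coefficients at order `N`. -/
def pascalSupport (N : ℕ) : Finset ℚ :=
  if N = 0 then {0}
  else if N = 1 then {1/2, -1/2}
  else if N % 2 = 0 then {0, 1, -1}
  else {1/2, -1/2, 3/2, -3/2}

/-- Partial derivative of `C` with respect to the `i`-th coordinate. -/
noncomputable def pderiv' {M : ℕ} (i : Fin M) (C : (Fin M → ℝ) → ℝ) : (Fin M → ℝ) → ℝ :=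
  fun θ => deriv (fun t => C (Function.update θ i t)) (θ i)

/-- The iterated mixed partial derivative `∂₁^{N 1} ⋯ ∂_M^{N M} C`. -/
noncomputable def pdMulti {M : ℕ} (N : Fin M → ℕ) (C : (Fin M → ℝ) → ℝ) : (Fin M → ℝ) → ℝ :=
  (List.finRange M).foldr (fun i f => (pderiv' i)^[N i] f) C

/-!
In each coordinate `C` is `a + h` with `h = b cos + c sin` antiperiodic of period `π`, so its
`n`-th derivative (`n ≥ 1`) is `h (t + n π / 2)`. The Pascal-tree coefficients are exactly the
weights that produce `2ⁿ h (t + n π / 2)` from the shifted values `h (t + π ω)` while cancelling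
the constant `a`. Partial derivatives preserve the coordinatewise trigonometric form, so these
one-variable identities compose to `∂^α C (θ) = 2^{-|α|} Σ_ω (Π_l d (ω l, N l)) C (θ + π ω)`.
Differentiating this identity in `θ i` and applying the triangle inequality gives the bound.
-/
open Real Function Finset

@[to_additive]
theorem Fintype.prod_update_of_apply_eq_one {ι M : Type*} [Fintype ι] [DecidableEq ι]
    [CommMonoid M] {f : ι → M} {j : ι} (hj : f j = 1) (b : M) :
    ∏ l, update f j b l = b * ∏ l, f l := by
  rw [Fintype.prod_eq_mul_prod_compl j, Fintype.prod_eq_mul_prod_compl j f, update_self,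
    prod_update_of_notMem (by simp), hj, one_mul]

theorem Fintype.sum_piFinset_update_of_eq_singleton {ι α β : Type*} [Fintype ι] [DecidableEq ι]
    [DecidableEq α] [AddCommMonoid β] {S : ι → Finset α} {j : ι} {a : α} (hS : S j = {a})
    (T : Finset α) (F : (ι → α) → β) :
    ∑ ω ∈ Fintype.piFinset (update S j T), F ω =
      ∑ x ∈ T, ∑ ω ∈ Fintype.piFinset S, F (update ω j x) := by
  have hmem : ∀ ω ∈ Fintype.piFinset S, ω j = a := fun ω hω => by
    simpa [hS] using Fintype.mem_piFinset.mp hω j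
  rw [← sum_product']
  refine sum_nbij' (fun ω => (ω j, update ω j a)) (fun p => update p.2 j p.1) ?_ ?_ ?_ ?_ ?_
  · intro ω hω
    simp only [mem_product, Fintype.mem_piFinset] at hω ⊢
    refine ⟨by simpa using hω j, fun l => ?_⟩
    rcases eq_or_ne l j with rfl | hl
    · simp [hS]
    · simpa [hl] using hω l
  · intro p hp
    simp only [mem_product, Fintype.mem_piFinset] at hp ⊢
    intro l
    rcases eq_or_ne l j with rfl | hl
    · simpa using hp.1
    · simpa [hl] using hp.2 l
  · intro ω _
    simp
  · intro p hp
    rw [mem_product] at hp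
    simp [← hmem p.2 hp.2]
  · intro ω _
    simp

theorem sum_pascalSupport_zero (f : ℚ → ℝ) :
    ∑ ω ∈ pascalSupport 0, (pascalD ω 0 : ℝ) * f ω = f 0 := by
  simp [pascalSupport, pascalD]

theorem sum_pascalSupport_one (f : ℚ → ℝ) :
    ∑ ω ∈ pascalSupport 1, (pascalD ω 1 : ℝ) * f ω = f (1 / 2) - f (-1 / 2) := by
  norm_num [pascalSupport, pascalD]
  ring

theorem sum_pascalSupport_even (k : ℕ) (f : ℚ → ℝ) :
    ∑ ω ∈ pascalSupport (2 * k + 2), (pascalD ω (2 * k + 2) : ℝ) * f ω =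
      (-1) ^ (k + 1) * 2 ^ (2 * k) * (2 * f 0 - f 1 - f (-1)) := by
  have h1 : (2 * k + 2) / 2 = k + 1 := by omega
  have h2 : (2 * k + 2 - 2) / 2 = k := by omega
  have h3 : 2 * k + 2 - 1 = 2 * k + 1 := by omega
  simp only [pascalSupport, pascalD, if_neg (show 2 * k + 2 ≠ 0 by omega),
    if_neg (show 2 * k + 2 ≠ 1 by omega), if_pos (show (2 * k + 2) % 2 = 0 by omega), h1, h2, h3]
  norm_num
  ring

theorem sum_pascalSupport_odd (k : ℕ) (f : ℚ → ℝ) :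
    ∑ ω ∈ pascalSupport (2 * k + 3), (pascalD ω (2 * k + 3) : ℝ) * f ω =
      (-1) ^ (k + 1) * 2 ^ (2 * k) *
        (3 * f (1 / 2) - 3 * f (-1 / 2) - f (3 / 2) + f (-3 / 2)) := by
  have h1 : (2 * k + 3 - 1) / 2 = k + 1 := by omega
  have h2 : 2 * k + 3 - 3 = 2 * k := by omega
  simp only [pascalSupport, pascalD, if_neg (show 2 * k + 3 ≠ 0 by omega),
    if_neg (show 2 * k + 3 ≠ 1 by omega), if_neg (show (2 * k + 3) % 2 ≠ 0 by omega), h1, h2]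
  norm_num
  ring

theorem sum_pascalD_mul_const_add_antiperiodic {h : ℝ → ℝ} (hh : Antiperiodic h π)
    (a t : ℝ) {n : ℕ} (hn : n ≠ 0) :
    ∑ ω ∈ pascalSupport n, (pascalD ω n : ℝ) * (a + h (t + π * ω)) =
      2 ^ n * h (t + n * (π / 2)) := by
  obtain rfl | ⟨k, rfl | rfl⟩ : n = 1 ∨ ∃ k, n = 2 * k + 2 ∨ n = 2 * k + 3 := by
    rcases Nat.even_or_odd' n with ⟨k, rfl | rfl⟩
    · exact Or.inr ⟨k - 1, Or.inl (by omega)⟩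
    · rcases k with _ | k
      · exact Or.inl rfl
      · exact Or.inr ⟨k, Or.inr (by omega)⟩
  · rw [sum_pascalSupport_one]
    set s := t + π / 2
    have hs : t + ((1 : ℕ) : ℝ) * (π / 2) = s := by push_cast; ring
    have h1 : t + π * ((1 / 2 : ℚ) : ℝ) = s := by push_cast; ring
    have h2 : t + π * ((-1 / 2 : ℚ) : ℝ) = s - π := by push_cast; ring
    rw [hs, h1, h2, hh.sub_eq]
    ring
  · rw [sum_pascalSupport_even]
    have hs : t + ↑(2 * k + 2) * (π / 2) = t + ↑(k + 1) * π := by push_cast; ring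
    have h0 : t + π * ((0 : ℚ) : ℝ) = t := by push_cast; ring
    have hp : t + π * ((1 : ℚ) : ℝ) = t + π := by push_cast; ring
    have hm : t + π * ((-1 : ℚ) : ℝ) = t - π := by push_cast; ring
    rw [hs, hh.add_nat_mul_eq, h0, hp, hm, hh.sub_eq, hh t]
    ring
  · rw [sum_pascalSupport_odd]
    set s := t + π / 2
    have hs : t + ↑(2 * k + 3) * (π / 2) = s + ↑(k + 1) * π := by push_cast; ring
    have h1 : t + π * ((1 / 2 : ℚ) : ℝ) = s := by push_cast; ring
    have h2 : t + π * ((-1 / 2 : ℚ) : ℝ) = s - π := by push_cast; ring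
    have h3 : t + π * ((3 / 2 : ℚ) : ℝ) = s + π := by push_cast; ring
    have h4 : t + π * ((-3 / 2 : ℚ) : ℝ) = s - π - π := by push_cast; ring
    rw [hs, hh.add_nat_mul_eq, h1, h2, h3, h4, hh.sub_eq, hh.sub_eq, hh.sub_eq, hh s]
    ring

theorem iterate_deriv_sinusoid (b c : ℝ) (n : ℕ) :
    deriv^[n] (fun t => b * cos t + c * sin t) =
      fun t => b * cos (t + n * (π / 2)) + c * sin (t + n * (π / 2)) := by
  induction n with
  | zero => simp
  | succ n ih =>
    funext t
    set s : ℝ := n * (π / 2)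
    have hd : HasDerivAt (fun t => b * cos (t + s) + c * sin (t + s))
        (b * -sin (t + s) + c * cos (t + s)) t :=
      (((hasDerivAt_id t).add_const s).cos.const_mul b).add
        (((hasDerivAt_id t).add_const s).sin.const_mul c) |>.congr_deriv (by simp)
    rw [iterate_succ_apply', ih, hd.deriv, show t + ↑(n + 1) * (π / 2) = t + s + π / 2 by
      push_cast; ring, cos_add_pi_div_two, sin_add_pi_div_two]

theorem iterate_deriv_eq_sum_pascalD {g : ℝ → ℝ} {a b c : ℝ}
    (hg : ∀ t, g t = a + b * cos t + c * sin t) (n : ℕ) (t : ℝ) :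
    deriv^[n] g t =
      1 / 2 ^ n * ∑ ω ∈ pascalSupport n, (pascalD ω n : ℝ) * g (t + π * ω) := by
  rcases n with _ | n
  · simp [sum_pascalSupport_zero]
  set h : ℝ → ℝ := fun t => b * cos t + c * sin t
  have hgh : g = fun t => a + h t := funext fun t => by rw [hg]; ring
  have hh : Antiperiodic h π := fun x => by simp only [h, cos_add_pi, sin_add_pi]; ring
  have hderiv : deriv^[n + 1] g = deriv^[n + 1] h := by
    rw [iterate_succ_apply, iterate_succ_apply, hgh]
    simp only [deriv_const_add']
  rw [hderiv, iterate_deriv_sinusoid, hgh,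
    sum_pascalD_mul_const_add_antiperiodic hh a t (Nat.succ_ne_zero n)]
  field_simp
  rfl

theorem iterate_pderiv'_apply {M : ℕ} (j : Fin M) (n : ℕ) (F : (Fin M → ℝ) → ℝ)
    (θ : Fin M → ℝ) :
    (pderiv' j)^[n] F θ = deriv^[n] (fun t => F (update θ j t)) (θ j) := by
  induction n generalizing F with
  | zero => simp
  | succ n ih =>
    have hupd : (fun t => pderiv' j F (update θ j t)) = deriv fun t => F (update θ j t) := by
      funext t
      simp only [pderiv', update_idem, update_self]
    rw [iterate_succ_apply, ih, hupd, ← iterate_succ_apply]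

noncomputable def pascalShiftSum {M : ℕ} (N : Fin M → ℕ) (F : (Fin M → ℝ) → ℝ)
    (θ : Fin M → ℝ) : ℝ :=
  1 / 2 ^ (∑ l, N l) * ∑ ω ∈ Fintype.piFinset (fun l => pascalSupport (N l)),
    (∏ l, (pascalD (ω l) (N l) : ℝ)) * F (θ + fun l => π * (ω l : ℝ))

section pascalShiftSum

variable {M : ℕ}

theorem pascalShiftSum_zero (F : (Fin M → ℝ) → ℝ) : pascalShiftSum (fun _ => 0) F = F := by
  funext θ
  have hS : pascalSupport 0 = {0} := rfl
  simp [pascalShiftSum, hS, Fintype.piFinset_singleton (fun _ : Fin M => (0 : ℚ)), pascalD,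
    ← Pi.zero_def]

theorem sum_pascalD_mul_pascalShiftSum_update (N : Fin M → ℕ) (F : (Fin M → ℝ) → ℝ)
    {j : Fin M} (hj : N j = 0) (n : ℕ) (θ : Fin M → ℝ) :
    1 / 2 ^ n * ∑ x ∈ pascalSupport n,
        (pascalD x n : ℝ) * pascalShiftSum N F (update θ j (θ j + π * x)) =
      pascalShiftSum (update N j n) F θ := by
  have hS : (fun l => pascalSupport (N l)) j = {0} := by simp [hj, pascalSupport]
  have hzero : ∀ ω ∈ Fintype.piFinset (fun l => pascalSupport (N l)), ω j = 0 :=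
    fun ω hω => by simpa [hS] using Fintype.mem_piFinset.mp hω j
  have hweight : ∀ ω ∈ Fintype.piFinset (fun l => pascalSupport (N l)), ∀ x,
      ∏ l, (pascalD (update ω j x l) (update N j n l) : ℝ) =
        pascalD x n * ∏ l, (pascalD (ω l) (N l) : ℝ) := fun ω hω x => by
    simp only [apply_update₂ (fun _ a b => (pascalD a b : ℝ))]
    exact Fintype.prod_update_of_apply_eq_one (by simp [hzero ω hω, hj, pascalD]) _
  have hshift : ∀ ω ∈ Fintype.piFinset (fun l => pascalSupport (N l)), ∀ x : ℚ,
      (θ + fun l => π * (update ω j x l : ℝ)) =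
        update θ j (θ j + π * x) + fun l => π * (ω l : ℝ) := fun ω hω x => by
    funext l
    rcases eq_or_ne l j with rfl | hl
    · simp [hzero ω hω]
    · simp [hl]
  have hpow : ∑ l, update N j n l = n + ∑ l, N l := Fintype.sum_update_of_apply_eq_zero hj n
  have hT : (fun l => pascalSupport (update N j n l)) =
      update (fun l => pascalSupport (N l)) j (pascalSupport n) :=
    funext (apply_update (fun _ => pascalSupport) N j n)
  symm
  simp only [pascalShiftSum]
  rw [hT, Fintype.sum_piFinset_update_of_eq_singleton (S := fun l => pascalSupport (N l)) hS,
    hpow, Finset.mul_sum, Finset.mul_sum]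
  refine sum_congr rfl fun x _ => ?_
  rw [Finset.mul_sum, Finset.mul_sum, Finset.mul_sum, Finset.mul_sum]
  refine sum_congr rfl fun ω hω => ?_
  rw [hweight ω hω, hshift ω hω, pow_add]
  ring

theorem abs_pascalShiftSum_le (N : Fin M → ℕ) (F : (Fin M → ℝ) → ℝ)
    (θ : Fin M → ℝ) :
    |pascalShiftSum N F θ| ≤ 1 / 2 ^ (∑ l, N l) *
      ∑ ω ∈ Fintype.piFinset (fun l => pascalSupport (N l)),
        (∏ l, |(pascalD (ω l) (N l) : ℝ)|) * |F (θ + fun l => π * (ω l : ℝ))| := by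
  rw [pascalShiftSum, abs_mul, abs_of_nonneg (by positivity)]
  gcongr
  refine (abs_sum_le_sum_abs _ _).trans_eq (sum_congr rfl fun ω _ => ?_)
  rw [abs_mul, abs_prod]

end pascalShiftSum

def IsCoordTrig {M : ℕ} (C : (Fin M → ℝ) → ℝ) : Prop :=
  ∀ (l : Fin M) (θ : Fin M → ℝ), ∃ a b c : ℝ, ∀ t : ℝ,
    C (update θ l t) = a + b * cos t + c * sin t

namespace IsCoordTrig

variable {M : ℕ} {F : (Fin M → ℝ) → ℝ}

theorem iterate_pderiv'_eq_sum (hF : IsCoordTrig F) (j : Fin M) (n : ℕ) (θ : Fin M → ℝ) :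
    (pderiv' j)^[n] F θ = 1 / 2 ^ n * ∑ x ∈ pascalSupport n,
      (pascalD x n : ℝ) * F (update θ j (θ j + π * x)) := by
  obtain ⟨a, b, c, hg⟩ := hF j θ
  rw [iterate_pderiv'_apply, iterate_deriv_eq_sum_pascalD hg]

theorem pderiv'_eq_half_sub (hF : IsCoordTrig F) (j : Fin M) (θ : Fin M → ℝ) :
    pderiv' j F θ =
      (F (update θ j (θ j + π / 2)) - F (update θ j (θ j - π / 2))) / 2 := by
  rw [← iterate_one (pderiv' j), hF.iterate_pderiv'_eq_sum, sum_pascalSupport_one]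
  push_cast
  ring_nf

theorem pderiv (hF : IsCoordTrig F) (j : Fin M) : IsCoordTrig (pderiv' j F) := by
  intro l θ
  rcases eq_or_ne l j with rfl | hlj
  · obtain ⟨a, b, c, hg⟩ := hF l θ
    refine ⟨0, c, -b, fun t => ?_⟩
    have hd : HasDerivAt (fun s => F (update θ l s)) (c * cos t - b * sin t) t := by
      simp only [hg]
      exact (((hasDerivAt_const t a).add ((hasDerivAt_cos t).const_mul b)).add
        ((hasDerivAt_sin t).const_mul c)).congr_deriv (by ring)
    simp only [pderiv', update_idem, update_self, hd.deriv]
    ring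
  · obtain ⟨a₁, b₁, c₁, h₁⟩ := hF l (update θ j (θ j + π / 2))
    obtain ⟨a₂, b₂, c₂, h₂⟩ := hF l (update θ j (θ j - π / 2))
    refine ⟨(a₁ - a₂) / 2, (b₁ - b₂) / 2, (c₁ - c₂) / 2, fun t => ?_⟩
    rw [hF.pderiv'_eq_half_sub, update_of_ne hlj.symm, update_comm hlj, update_comm hlj, h₁, h₂]
    ring

theorem foldr_iterate_pderiv' (hF : IsCoordTrig F) (N : Fin M → ℕ) (L : List (Fin M)) :
    IsCoordTrig (L.foldr (fun i f => (pderiv' i)^[N i] f) F) := by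
  induction L with
  | nil => exact hF
  | cons j L ih => exact Iterate.rec IsCoordTrig ih (fun _ h => h.pderiv j) (N j)

theorem differentiable_update (hF : IsCoordTrig F) (i : Fin M) (θ : Fin M → ℝ) :
    Differentiable ℝ fun t => F (update θ i t) := by
  obtain ⟨a, b, c, hg⟩ := hF i θ
  simp only [hg]
  fun_prop

theorem hasDerivAt_update_add (hF : IsCoordTrig F) (i : Fin M) (θ v : Fin M → ℝ) :
    HasDerivAt (fun t => F (update θ i t + v)) (pderiv' i F (θ + v)) (θ i) := by
  have hshift : ∀ t, update θ i t + v = update (θ + v) i (t + v i) := fun t => by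
    funext l
    rcases eq_or_ne l i with rfl | hl <;> simp [*]
  simp only [hshift]
  exact ((hF.differentiable_update i (θ + v)) _).hasDerivAt.comp_add_const (θ i) (v i)

theorem foldr_iterate_pderiv'_eq_pascalShiftSum (hF : IsCoordTrig F) (N : Fin M → ℕ)
    {L : List (Fin M)} (hL : L.Nodup) :
    L.foldr (fun i f => (pderiv' i)^[N i] f) F =
      pascalShiftSum (fun l => if l ∈ L then N l else 0) F := by
  induction L with
  | nil => simp [pascalShiftSum_zero]
  | cons j L ih =>
    obtain ⟨hj, hL⟩ := List.nodup_cons.mp hL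
    have hN : (fun l => if l ∈ j :: L then N l else 0) =
        update (fun l => if l ∈ L then N l else 0) j (N j) := by
      funext l
      rcases eq_or_ne l j with rfl | hl <;> simp [*]
    funext θ
    rw [List.foldr_cons, (hF.foldr_iterate_pderiv' N L).iterate_pderiv'_eq_sum, ih hL, hN,
      ← sum_pascalD_mul_pascalShiftSum_update _ _ (if_neg hj)]

theorem pdMulti_eq_pascalShiftSum (hF : IsCoordTrig F) (N : Fin M → ℕ) :
    pdMulti N F = pascalShiftSum N F := by
  simpa [pdMulti] using hF.foldr_iterate_pderiv'_eq_pascalShiftSum N (List.nodup_finRange M)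

theorem pderiv'_pascalShiftSum (hF : IsCoordTrig F) (i : Fin M) (N : Fin M → ℕ)
    (θ : Fin M → ℝ) :
    pderiv' i (pascalShiftSum N F) θ = pascalShiftSum N (pderiv' i F) θ := by
  exact HasDerivAt.deriv <| (HasDerivAt.fun_sum fun ω _ =>
    (hF.hasDerivAt_update_add i θ _).const_mul (∏ l, (pascalD (ω l) (N l) : ℝ))).const_mul _

end IsCoordTrig

/-- Eq. (16): the magnitude of the `(|α|+1)`-th order derivative is bounded by
`|∂ᵢ(∂₁^{N(1)} ⋯ ∂_M^{N(M)} C)(θ)| ≤ 2^{−|α|} Σ_ω (Π_l |d(ω(l), N(l))|) |∂ᵢC(θ + π ω)|`. -/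
theorem higher_order_derivative_bound {M : ℕ} (C : (Fin M → ℝ) → ℝ)
    (htrig : ∀ (l : Fin M) (θ : Fin M → ℝ), ∃ a b c : ℝ, ∀ t : ℝ,
      C (Function.update θ l t) = a + b * Real.cos t + c * Real.sin t)
    (N : Fin M → ℕ) (i : Fin M) (θ : Fin M → ℝ) :
    |pderiv' i (pdMulti N C) θ| ≤
      (1 / 2 ^ (∑ l, N l)) *
        ∑ ω ∈ Fintype.piFinset (fun l => pascalSupport (N l)),
          (∏ l, |(pascalD (ω l) (N l) : ℝ)|) *
            |pderiv' i C (θ + fun l => Real.pi * ((ω l : ℚ) : ℝ))| := by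
  have hC : IsCoordTrig C := htrig
  rw [hC.pdMulti_eq_pascalShiftSum, hC.pderiv'_pascalShiftSum]
  exact abs_pascalShiftSum_le N (pderiv' i C) θ
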